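/- arXiv:1610.07515 — 4 statements merged into one kernel-verified Lean document; each statement's English description precedes it below -/
import Mathlib

section
/- Let G be a group and let a, b ∈ G satisfy a * b * a⁻¹ = b². Then for every natural number n, the element b^(2^n) can be written as a product of at most 2n + 1 elements of the set {a, b, a⁻¹, b⁻¹}; that is, there exists a list l of elements of G with each entry in {a, b, a⁻¹, b⁻¹}, l.prod = b^(2^n), and l.length ≤ 2n + 1. -/
theorem conj_pow_eq_pow_pow_of_conj_eq_pow {G : Type*} [Group G] {a b : G} {k : ℕ}
    (h : a * b * a⁻¹ = b ^ k) (m : ℕ) : a ^ m * b * (a ^ m)⁻¹ = b ^ (k ^ m) := by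
  induction m with
  | zero => simp
  | succ m ih =>
    calc a ^ (m + 1) * b * (a ^ (m + 1))⁻¹ = a * (a ^ m * b * (a ^ m)⁻¹) * a⁻¹ := by group
      _ = (a * b * a⁻¹) ^ k ^ m := by rw [ih, conj_pow]
      _ = b ^ k ^ (m + 1) := by rw [h, ← pow_mul, pow_succ']

theorem prod_replicate_append_singleton_append_replicate_inv {G : Type*} [Group G]
    (a b : G) (n : ℕ) :
    (List.replicate n a ++ [b] ++ List.replicate n a⁻¹).prod = a ^ n * b * (a ^ n)⁻¹ := by
  simp [List.prod_replicate, inv_pow, mul_assoc]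

/-- In any group where `a * b * a⁻¹ = b ^ 2`, the element `b ^ (2 ^ n)` is a product of at
most `2 * n + 1` elements of `{a, b, a⁻¹, b⁻¹}`. -/
theorem bs_power_short_word {G : Type*} [Group G] (a b : G)
    (h : a * b * a⁻¹ = b ^ 2) (n : ℕ) :
    ∃ l : List G, (∀ x ∈ l, x ∈ ({a, b, a⁻¹, b⁻¹} : Set G)) ∧
      l.prod = b ^ (2 ^ n) ∧ l.length ≤ 2 * n + 1 := by
  refine ⟨List.replicate n a ++ [b] ++ List.replicate n a⁻¹, ?_, ?_, ?_⟩
  · simp only [List.mem_append, List.mem_replicate, List.mem_singleton]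
    rintro x ((⟨-, rfl⟩ | rfl) | ⟨-, rfl⟩) <;> simp
  · rw [prod_replicate_append_singleton_append_replicate_inv,
      conj_pow_eq_pow_pow_of_conj_eq_pow h]
  · simp only [List.length_append, List.length_replicate, List.length_singleton]
    omega
end

section
/- In the Baumslag–Solitar group BS(1,2) = ⟨a, b | a b a⁻¹ = b²⟩, for every natural number n ≥ 1: the element b^(2^n) is a product of at most 2n + 1 elements of {a, b, a⁻¹, b⁻¹}, while every list of elements of {b, b⁻¹} whose product equals b^(2^n) has length at least 2^n. In particular the distortion function of the subgroup ⟨b⟩ in BS(1,2) satisfies Dist(2n+1) ≥ 2^n, so it is at least exponential. -/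
/-- The single relator `a * b * a⁻¹ * b⁻²` defining the Baumslag–Solitar group `BS(1,2)`,
where `a = FreeGroup.of 0` and `b = FreeGroup.of 1`. -/
def bsRels : Set (FreeGroup (Fin 2)) :=
  {FreeGroup.of 0 * FreeGroup.of 1 * (FreeGroup.of 0)⁻¹ * ((FreeGroup.of 1) ^ 2)⁻¹}

/-- The Baumslag–Solitar group `BS(1,2) = ⟨a, b | a b a⁻¹ = b²⟩` as a presented group. -/
abbrev BS12 : Type := PresentedGroup bsRels

/-- The generator `a` of `BS(1,2)`. -/
def bsa : BS12 := PresentedGroup.of 0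

/-- The generator `b` of `BS(1,2)`. -/
def bsb : BS12 := PresentedGroup.of 1

/-
`a` and `b` act on `ℚ` as `x ↦ 2x` and `x ↦ x + 1`; in this action `b` is a translation of
infinite order, so `b ^ k = b ^ m` forces `k = m`, and a word in `b^{±1}` with product `b ^ m`
has at least `|m|` letters. On the other hand the relation `a b a⁻¹ = b²` iterates to
`aⁿ b a⁻ⁿ = b ^ (2 ^ n)`, a word of length `2n + 1`.
-/

theorem conj_pow_eq_pow_pow {G : Type*} [Group G] {a b : G} {m : ℕ}
    (h : a * b * a⁻¹ = b ^ m) (n : ℕ) : a ^ n * b * (a ^ n)⁻¹ = b ^ (m ^ n) := by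
  induction n with
  | zero => simp
  | succ n ih =>
    calc a ^ (n + 1) * b * (a ^ (n + 1))⁻¹ = a * (a ^ n * b * (a ^ n)⁻¹) * a⁻¹ := by group
      _ = (a * b * a⁻¹) ^ m ^ n := by rw [ih, conj_pow]
      _ = b ^ m ^ (n + 1) := by rw [h, ← pow_mul, pow_succ']

theorem List.prod_replicate_append_cons_replicate_inv {G : Type*} [Group G] (a b : G) (n : ℕ) :
    (List.replicate n a ++ b :: List.replicate n a⁻¹).prod = a ^ n * b * (a ^ n)⁻¹ := by
  simp [mul_assoc]

theorem List.exists_prod_eq_zpow_of_forall_mem_pair {G : Type*} [Group G] {g : G} :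
    ∀ {l : List G}, (∀ x ∈ l, x ∈ ({g, g⁻¹} : Set G)) →
      ∃ k : ℤ, l.prod = g ^ k ∧ k.natAbs ≤ l.length
  | [], _ => ⟨0, by simp, by simp⟩
  | x :: l, hl => by
    obtain ⟨k, hk, hkl⟩ := exists_prod_eq_zpow_of_forall_mem_pair fun y hy => hl y (.tail x hy)
    rcases hl x List.mem_cons_self with rfl | rfl
    · refine ⟨1 + k, by rw [List.prod_cons, hk, zpow_add, zpow_one], ?_⟩
      simp only [List.length_cons]; omega
    · refine ⟨-1 + k, by rw [List.prod_cons, hk, zpow_add, zpow_neg_one], ?_⟩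
      simp only [List.length_cons]; omega

theorem List.le_length_of_prod_eq_pow {G : Type*} [Group G] {g : G}
    (hg : Function.Injective fun k : ℤ => g ^ k) {l : List G}
    (hl : ∀ x ∈ l, x ∈ ({g, g⁻¹} : Set G)) {m : ℕ} (h : l.prod = g ^ m) : m ≤ l.length := by
  obtain ⟨k, hk, hkl⟩ := exists_prod_eq_zpow_of_forall_mem_pair hl
  have : k = m := hg (by simp only [← hk, h, zpow_natCast])
  omega

theorem bsa_mul_bsb_mul_bsa_inv : bsa * bsb * bsa⁻¹ = bsb ^ 2 :=
  PresentedGroup.mk_eq_mk_of_mul_inv_mem rfl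

noncomputable def bsToPerm : BS12 →* Equiv.Perm ℚ :=
  PresentedGroup.toGroup (f := ![Equiv.mulLeft₀ 2 two_ne_zero, Equiv.addRight 1]) <| by
    rintro r rfl
    ext x
    norm_num [Equiv.Perm.inv_def, sq, mul_add, add_assoc, ← mul_assoc]

theorem bsToPerm_bsb : bsToPerm bsb = Equiv.addRight 1 := PresentedGroup.toGroup.of _

theorem injective_bsb_zpow : Function.Injective fun k : ℤ => bsb ^ k := by
  refine Function.Injective.of_comp (f := bsToPerm) fun j k h => ?_
  simpa [bsToPerm_bsb] using congr($h 0)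

theorem bs_subgroup_exponential_distortion_general (n : ℕ) :
    (∃ l : List BS12, (∀ x ∈ l, x ∈ ({bsa, bsb, bsa⁻¹, bsb⁻¹} : Set BS12)) ∧
      l.prod = bsb ^ (2 ^ n) ∧ l.length ≤ 2 * n + 1) ∧
    (∀ l : List BS12, (∀ x ∈ l, x ∈ ({bsb, bsb⁻¹} : Set BS12)) →
      l.prod = bsb ^ (2 ^ n) → 2 ^ n ≤ l.length) := by
  refine ⟨⟨List.replicate n bsa ++ bsb :: List.replicate n bsa⁻¹, ?_, ?_, ?_⟩,
    fun l hl h => l.le_length_of_prod_eq_pow injective_bsb_zpow hl h⟩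
  · intro x hx
    simp only [List.mem_append, List.mem_cons, List.mem_replicate] at hx
    rcases hx with ⟨-, rfl⟩ | rfl | ⟨-, rfl⟩ <;> simp
  · rw [List.prod_replicate_append_cons_replicate_inv,
      conj_pow_eq_pow_pow bsa_mul_bsb_mul_bsa_inv]
  · simp only [List.length_append, List.length_replicate, List.length_cons]
    omega

/-- In `BS(1,2)`, for every `n ≥ 1`, the element `b ^ (2 ^ n)` is a product of at most
`2 * n + 1` elements of `{a, b, a⁻¹, b⁻¹}`, while every list of elements of `{b, b⁻¹}`
whose product is `b ^ (2 ^ n)` has length at least `2 ^ n`.  Hence the distortion of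
`⟨b⟩` in `BS(1,2)` satisfies `Dist (2n+1) ≥ 2 ^ n`, i.e. it is at least exponential. -/
theorem bs_subgroup_exponential_distortion (n : ℕ) (hn : 1 ≤ n) :
    (∃ l : List BS12, (∀ x ∈ l, x ∈ ({bsa, bsb, bsa⁻¹, bsb⁻¹} : Set BS12)) ∧
      l.prod = bsb ^ (2 ^ n) ∧ l.length ≤ 2 * n + 1) ∧
    (∀ l : List BS12, (∀ x ∈ l, x ∈ ({bsb, bsb⁻¹} : Set BS12)) →
      l.prod = bsb ^ (2 ^ n) → 2 ^ n ≤ l.length) :=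
  bs_subgroup_exponential_distortion_general n
end

section
/- In the group of 3×3 upper unitriangular matrices over ℤ with A = !![1,1,0; 0,1,0; 0,0,1], B = !![1,0,0; 0,1,1; 0,0,1], C = !![1,0,1; 0,1,0; 0,0,1], for every natural number n ≥ 1: the element C^(n²) is a product of at most 4n elements of {A, B, A⁻¹, B⁻¹}, while every list of elements of {C, C⁻¹} whose product equals C^(n²) has length at least n². In particular the distortion function of the center ⟨C⟩ in the Heisenberg group satisfies Dist(4n) ≥ n², so it is at least quadratic. -/
/-- The generator `A = !![1,1,0; 0,1,0; 0,0,1]` of the integer Heisenberg group, as a unit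
of the ring of 3×3 integer matrices. -/
def heisA : (Matrix (Fin 3) (Fin 3) ℤ)ˣ where
  val := !![1,1,0; 0,1,0; 0,0,1]
  inv := !![1,-1,0; 0,1,0; 0,0,1]
  val_inv := by simp [Matrix.mul_fin_three, ← Matrix.one_fin_three]
  inv_val := by simp [Matrix.mul_fin_three, ← Matrix.one_fin_three]

/-- The generator `B = !![1,0,0; 0,1,1; 0,0,1]` of the integer Heisenberg group. -/
def heisB : (Matrix (Fin 3) (Fin 3) ℤ)ˣ where
  val := !![1,0,0; 0,1,1; 0,0,1]
  inv := !![1,0,0; 0,1,-1; 0,0,1]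
  val_inv := by simp [Matrix.mul_fin_three, ← Matrix.one_fin_three]
  inv_val := by simp [Matrix.mul_fin_three, ← Matrix.one_fin_three]

/-- The central element `C = !![1,0,1; 0,1,0; 0,0,1]` of the integer Heisenberg group. -/
def heisC : (Matrix (Fin 3) (Fin 3) ℤ)ˣ where
  val := !![1,0,1; 0,1,0; 0,0,1]
  inv := !![1,0,-1; 0,1,0; 0,0,1]
  val_inv := by simp [Matrix.mul_fin_three, ← Matrix.one_fin_three]
  inv_val := by simp [Matrix.mul_fin_three, ← Matrix.one_fin_three]

/-!
The commutator of `A` and `B` is the central element `C`, and whenever `⁅a, b⁆` commutes with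
`a` and `b` one has `⁅a ^ m, b ^ n⁆ = ⁅a, b⁆ ^ (m * n)`; so `C ^ (n ^ 2) = ⁅A ^ n, B ^ n⁆` is a
word of length `4 * n` in `A^±1, B^±1`. On the other hand a word of length `L` in `C^±1` equals
some `C ^ k` with `|k| ≤ L`, and since `C` has infinite order `k` is determined by the product.
-/

open scoped commutatorElement

section Group

variable {G : Type*} [Group G]

theorem pow_mul_mul_pow_inv_eq_commutatorElement_pow_mul {a b : G} (ha : Commute a ⁅a, b⁆)
    (m : ℕ) : a ^ m * b * (a ^ m)⁻¹ = ⁅a, b⁆ ^ m * b := by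
  induction m with
  | zero => simp
  | succ m ih =>
    calc a ^ (m + 1) * b * (a ^ (m + 1))⁻¹ = a * (a ^ m * b * (a ^ m)⁻¹) * a⁻¹ := by group
      _ = ⁅a, b⁆ ^ m * (a * b * a⁻¹) := by rw [ih, ← mul_assoc, (ha.pow_right m).eq]; group
      _ = ⁅a, b⁆ ^ (m + 1) * b := by
        rw [pow_succ, mul_assoc _ ⁅a, b⁆, ← conj_eq_commutatorElement_mul, MulAut.conj_apply]

theorem commutatorElement_pow_pow {a b : G} (ha : Commute a ⁅a, b⁆) (hb : Commute b ⁅a, b⁆)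
    (m n : ℕ) : ⁅a ^ m, b ^ n⁆ = ⁅a, b⁆ ^ (m * n) := by
  calc ⁅a ^ m, b ^ n⁆ = (a ^ m * b * (a ^ m)⁻¹) ^ n * (b ^ n)⁻¹ := by
        rw [conj_pow, commutatorElement_def]
    _ = ⁅a, b⁆ ^ (m * n) := by
        rw [pow_mul_mul_pow_inv_eq_commutatorElement_pow_mul ha,
          (hb.pow_right m).symm.mul_pow, ← pow_mul, mul_inv_cancel_right]

theorem exists_list_prod_eq_commutatorElement_pow_pow (a b : G) (n : ℕ) :
    ∃ l : List G, (∀ x ∈ l, x ∈ ({a, b, a⁻¹, b⁻¹} : Set G)) ∧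
      l.prod = ⁅a ^ n, b ^ n⁆ ∧ l.length = 4 * n := by
  refine ⟨.replicate n a ++ .replicate n b ++ .replicate n a⁻¹ ++ .replicate n b⁻¹,
    fun x hx => ?_, ?_, by simp; omega⟩
  · simp only [List.mem_append, List.mem_replicate] at hx
    rcases hx with ((⟨_, rfl⟩ | ⟨_, rfl⟩) | ⟨_, rfl⟩) | ⟨_, rfl⟩ <;> simp
  · simp [commutatorElement_def, List.prod_replicate, inv_pow, mul_assoc]

theorem natAbs_le_length_of_prod_eq_zpow {c : G} (hc : ¬IsOfFinOrder c) {l : List G}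
    (hl : ∀ x ∈ l, x ∈ ({c, c⁻¹} : Set G)) {k : ℤ} (hk : l.prod = c ^ k) :
    k.natAbs ≤ l.length := by
  induction l generalizing k with
  | nil =>
    have hk0 : k = 0 := injective_zpow_iff_not_isOfFinOrder.2 hc (by simpa using hk.symm)
    simp [hk0]
  | cons x l ih =>
    have ih := @ih (fun y hy => hl y (List.mem_cons_of_mem x hy))
    rw [List.length_cons]
    rcases hl x List.mem_cons_self with rfl | rfl
    · have := ih (k := k - 1) <| by
        rw [sub_eq_neg_add, zpow_add, zpow_neg_one, ← hk, List.prod_cons, inv_mul_cancel_left]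
      omega
    · have := ih (k := k + 1) <| by
        rw [add_comm, zpow_add, zpow_one, ← hk, List.prod_cons, mul_inv_cancel_left]
      omega

end Group

theorem commutatorElement_heisA_heisB : ⁅heisA, heisB⁆ = heisC := by
  ext : 1
  simp [commutatorElement_def, heisA, heisB, heisC]

theorem commute_heisA_heisC : Commute heisA heisC := by
  ext : 1
  simp [heisA, heisC]

theorem commute_heisB_heisC : Commute heisB heisC := by
  ext : 1
  simp [heisB, heisC]

theorem val_heisC_pow (n : ℕ) :
    ((heisC ^ n : (Matrix (Fin 3) (Fin 3) ℤ)ˣ) : Matrix (Fin 3) (Fin 3) ℤ)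
      = !![1, 0, (n : ℤ); 0, 1, 0; 0, 0, 1] := by
  induction n with
  | zero => simp [Matrix.one_fin_three]
  | succ n ih =>
    rw [pow_succ, Units.val_mul, ih]
    simp [heisC, add_comm]

theorem not_isOfFinOrder_heisC : ¬IsOfFinOrder heisC := by
  rw [isOfFinOrder_iff_pow_eq_one]
  rintro ⟨n, hn, hpow⟩
  have h02 := congrArg (fun g : (Matrix (Fin 3) (Fin 3) ℤ)ˣ => (g : Matrix (Fin 3) (Fin 3) ℤ) 0 2) hpow
  rw [val_heisC_pow, Units.val_one] at h02
  simp at h02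
  omega

theorem heisenberg_center_quadratic_distortion_general (n : ℕ) :
    (∃ l : List (Matrix (Fin 3) (Fin 3) ℤ)ˣ,
      (∀ x ∈ l, x ∈ ({heisA, heisB, heisA⁻¹, heisB⁻¹} : Set (Matrix (Fin 3) (Fin 3) ℤ)ˣ)) ∧
      l.prod = heisC ^ (n ^ 2) ∧ l.length ≤ 4 * n) ∧
    (∀ l : List (Matrix (Fin 3) (Fin 3) ℤ)ˣ,
      (∀ x ∈ l, x ∈ ({heisC, heisC⁻¹} : Set (Matrix (Fin 3) (Fin 3) ℤ)ˣ)) →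
      l.prod = heisC ^ (n ^ 2) → n ^ 2 ≤ l.length) := by
  refine ⟨?_, fun l hl hprod => ?_⟩
  · obtain ⟨l, hl, hprod, hlen⟩ := exists_list_prod_eq_commutatorElement_pow_pow heisA heisB n
    have hC := commutatorElement_heisA_heisB
    refine ⟨l, hl, ?_, hlen.le⟩
    rw [hprod, commutatorElement_pow_pow (hC ▸ commute_heisA_heisC) (hC ▸ commute_heisB_heisC),
      hC, sq]
  · exact_mod_cast natAbs_le_length_of_prod_eq_zpow not_isOfFinOrder_heisC hl
      (k := ((n ^ 2 : ℕ) : ℤ)) (by rw [hprod, zpow_natCast])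

/-- In the integer Heisenberg group, for every `n ≥ 1` the element `C ^ (n²)` is a product
of at most `4 * n` elements of `{A, B, A⁻¹, B⁻¹}`, while every list of elements of
`{C, C⁻¹}` whose product is `C ^ (n²)` has length at least `n²`.  Hence the distortion of
the center `⟨C⟩` satisfies `Dist (4n) ≥ n²`, i.e. it is at least quadratic. -/
theorem heisenberg_center_quadratic_distortion (n : ℕ) (hn : 1 ≤ n) :
    (∃ l : List (Matrix (Fin 3) (Fin 3) ℤ)ˣ,
      (∀ x ∈ l, x ∈ ({heisA, heisB, heisA⁻¹, heisB⁻¹} : Set (Matrix (Fin 3) (Fin 3) ℤ)ˣ)) ∧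
      l.prod = heisC ^ (n ^ 2) ∧ l.length ≤ 4 * n) ∧
    (∀ l : List (Matrix (Fin 3) (Fin 3) ℤ)ˣ,
      (∀ x ∈ l, x ∈ ({heisC, heisC⁻¹} : Set (Matrix (Fin 3) (Fin 3) ℤ)ˣ)) →
      l.prod = heisC ^ (n ^ 2) → n ^ 2 ≤ l.length) :=
  heisenberg_center_quadratic_distortion_general n
end

section
/- Let G be a group, let a : Fin 14 → G, and let t ∈ G. Suppose that for every j, the element t⁻¹ * (a j) * t is a product of exactly 14 elements of the set {a 0, …, a 13} (a positive word of length 14, no inverses). Then for every natural number n, the element t⁻ⁿ * (a 0) * tⁿ is a product of exactly 14ⁿ elements of {a 0, …, a 13} (a positive word of length 14ⁿ); moreover t⁻ⁿ * (a 0) * tⁿ is a product of 2n + 1 elements of {a 0, …, a 13, t, t⁻¹}. -/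
/-! Conjugation by `t⁻¹` substitutes a positive word of length 14 for each generator `a j`, so
conjugating by `t⁻ⁿ` turns the single letter `a 0` into a positive word of length `14 ^ n`. -/

section

variable {M N : Type*} [Monoid M] [Monoid N]

def IsPositiveWord (S : Set M) (n : ℕ) (g : M) : Prop :=
  ∃ l : List M, (∀ x ∈ l, x ∈ S) ∧ l.length = n ∧ l.prod = g

namespace IsPositiveWord

variable {S : Set M} {m n : ℕ} {g h : M}

theorem one (S : Set M) : IsPositiveWord S 0 1 :=
  ⟨[], by simp, rfl, rfl⟩

theorem of_mem (hg : g ∈ S) : IsPositiveWord S 1 g :=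
  ⟨[g], by simpa using hg, rfl, List.prod_singleton⟩

theorem mul (hg : IsPositiveWord S m g) (hh : IsPositiveWord S n h) :
    IsPositiveWord S (m + n) (g * h) := by
  obtain ⟨l, hlS, rfl, rfl⟩ := hg
  obtain ⟨l', hl'S, rfl, rfl⟩ := hh
  refine ⟨l ++ l', ?_, List.length_append, List.prod_append⟩
  simpa only [List.mem_append, or_imp, forall_and] using ⟨hlS, hl'S⟩

theorem pow (hg : g ∈ S) (n : ℕ) : IsPositiveWord S n (g ^ n) :=
  ⟨List.replicate n g, by simpa [List.mem_replicate] using fun _ => hg, List.length_replicate,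
    List.prod_replicate n g⟩

theorem map {T : Set N} {k : ℕ} (f : M →* N) (hf : ∀ x ∈ S, IsPositiveWord T k (f x))
    (hg : IsPositiveWord S n g) : IsPositiveWord T (k * n) (f g) := by
  obtain ⟨l, hlS, rfl, rfl⟩ := hg
  induction l with
  | nil => simpa using one T
  | cons x l ih =>
    rw [List.prod_cons, map_mul, List.length_cons, mul_add_one, add_comm]
    exact (hf x (hlS x List.mem_cons_self)).mul
      (ih fun y hy => hlS y (List.mem_cons_of_mem x hy))

theorem conj_pow {G : Type*} [Group G] {S : Set G} {k : ℕ} {t : G}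
    (hS : ∀ x ∈ S, IsPositiveWord S k (t⁻¹ * x * t)) (n : ℕ) :
    ∀ x ∈ S, IsPositiveWord S (k ^ n) (t⁻¹ ^ n * x * t ^ n) := by
  induction n with
  | zero => simpa using fun x => of_mem
  | succ n ih =>
    intro x hx
    have hconj : t⁻¹ ^ (n + 1) * x * t ^ (n + 1) = MulAut.conj (t⁻¹ ^ n) (t⁻¹ * x * t) := by
      rw [MulAut.conj_apply]
      group
    rw [hconj, pow_succ]
    refine map (MulAut.conj (t⁻¹ ^ n)).toMonoidHom (fun y hy => ?_) (hS x hx)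
    simpa only [MulEquiv.coe_toMonoidHom, MulAut.conj_apply, inv_pow, inv_inv] using ih y hy

end IsPositiveWord

end

/-- If `t⁻¹ * a j * t` is a positive word of length 14 in the `a j`'s for each `j`, then
`t⁻ⁿ * a 0 * tⁿ` is a positive word of length `14 ^ n` in the `a j`'s, and it is also a
product of `2 * n + 1` elements of `{a 0, …, a 13, t, t⁻¹}`.  This is the exponential
distortion computation for `F₁ = ⟨a₁, …, a₁₄⟩` inside
`G₁ = ⟨a₁, …, a₁₄, t | t⁻¹ aⱼ t = w₁ⱼ⟩`. -/
theorem free_subgroup_exponential_distortion {G : Type*} [Group G]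
    (a : Fin 14 → G) (t : G)
    (h : ∀ j : Fin 14, ∃ l : List G, (∀ x ∈ l, x ∈ Set.range a) ∧
      l.length = 14 ∧ l.prod = t⁻¹ * a j * t) :
    ∀ n : ℕ,
      (∃ l : List G, (∀ x ∈ l, x ∈ Set.range a) ∧
        l.length = 14 ^ n ∧ l.prod = t⁻¹ ^ n * a 0 * t ^ n) ∧
      (∃ l : List G, (∀ x ∈ l, x ∈ Set.range a ∪ {t, t⁻¹}) ∧
        l.length = 2 * n + 1 ∧ l.prod = t⁻¹ ^ n * a 0 * t ^ n) := by
  intro n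
  have hconj : ∀ x ∈ Set.range a, IsPositiveWord (Set.range a) 14 (t⁻¹ * x * t) := by
    rintro _ ⟨j, rfl⟩
    exact h j
  refine ⟨IsPositiveWord.conj_pow hconj n (a 0) ⟨0, rfl⟩, ?_⟩
  have hword : IsPositiveWord (Set.range a ∪ {t, t⁻¹}) (n + 1 + n) (t⁻¹ ^ n * a 0 * t ^ n) :=
    ((IsPositiveWord.pow (by simp) n).mul (IsPositiveWord.of_mem (.inl ⟨0, rfl⟩))).mul
      (IsPositiveWord.pow (by simp) n)
  rwa [show n + 1 + n = 2 * n + 1 by omega] at hword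
end
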